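/- (Symmetry for 1-blocks) Let n be odd, η ∈ [0,1], 0 ≤ ℓ ≤ n and t ∈ ℕ. Then Φη^t(B(n,ℓ))({e(B(n,ℓ))}) = Φη^t(B(n,n−ℓ))({e(B(n,n−ℓ))}); that is, the 1-block of length ℓ and the 1-block of length n−ℓ have the same probability of having reached their respective correct end states after t steps, hence equal classification time distributions and equal classification qualities. -/

import Mathlib

open scoped ENNReal

/-- A configuration of the ring of `n` cells, each in a state from `Fin 2`. -/
abbrev Config (n : ℕ) := ZMod n → Fin 2

/-- The traffic-majority local rule `φ_η`. -/
def phi (η : ℝ) (a b c : Fin 2) : ℝ :=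
  if b = 0 then
    if a = 1 then (if c = 1 then 1 else 1 - η) else 0
  else
    if a = 0 ∧ c = 0 then 0 else if a = 1 ∧ c = 0 then η else 1

lemma phi_nonneg {η : ℝ} (h0 : 0 ≤ η) (h1 : η ≤ 1) (a b c : Fin 2) :
    0 ≤ phi η a b c := by
  unfold phi; split_ifs <;> linarith

lemma phi_le_one {η : ℝ} (h0 : 0 ≤ η) (h1 : η ≤ 1) (a b c : Fin 2) :
    phi η a b c ≤ 1 := by
  unfold phi; split_ifs <;> linarith

/-- The probability (as an extended nonnegative real) that, starting from
configuration `c`, the cell at `x` is in state `σ` after one step. -/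
noncomputable def cellWeight (n : ℕ) (η : ℝ) (c : Config n) (x : ZMod n) (σ : Fin 2) : ℝ≥0∞ :=
  if σ = 1 then ENNReal.ofReal (phi η (c (x - 1)) (c x) (c (x + 1)))
  else ENNReal.ofReal (1 - phi η (c (x - 1)) (c x) (c (x + 1)))

/-- The probability of the transition `c → c'` in one step: the cells are
updated independently. -/
noncomputable def stepFun (n : ℕ) [NeZero n] (η : ℝ) (c c' : Config n) : ℝ≥0∞ :=
  ∏ x : ZMod n, cellWeight n η c x (c' x)

lemma stepFun_sum (n : ℕ) [NeZero n] {η : ℝ} (h0 : 0 ≤ η) (h1 : η ≤ 1)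
    (c : Config n) : ∑ c' : Config n, stepFun n η c c' = 1 := by
  have h := Finset.prod_univ_sum (fun _ : ZMod n => (Finset.univ : Finset (Fin 2)))
    (fun x σ => cellWeight n η c x σ)
  rw [Fintype.piFinset_univ] at h
  have h2 : ∀ x : ZMod n, ∑ σ : Fin 2, cellWeight n η c x σ = 1 := by
    intro x
    rw [Fin.sum_univ_two]
    simp only [cellWeight]
    norm_num
    rw [← ENNReal.ofReal_add (by linarith [phi_le_one h0 h1 (c (x-1)) (c x) (c (x+1))])
      (phi_nonneg h0 h1 (c (x-1)) (c x) (c (x+1)))]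
    norm_num
  rw [Finset.prod_congr rfl (fun x _ => h2 x), Finset.prod_const_one] at h
  exact h.symm

/-- The global transition `Φ_η` of the traffic-majority rule, as a PMF. -/
noncomputable def step (n : ℕ) [NeZero n] (η : ℝ) (h0 : 0 ≤ η) (h1 : η ≤ 1) (c : Config n) :
    PMF (Config n) :=
  PMF.ofFintype (stepFun n η c) (stepFun_sum n h0 h1 c)

/-- The `t`-step distribution `Φ_η^t(c)`, obtained by `t`-fold monadic bind. -/
noncomputable def iter (n : ℕ) [NeZero n] (η : ℝ) (h0 : 0 ≤ η) (h1 : η ≤ 1) :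
    ℕ → Config n → PMF (Config n)
  | 0, c => PMF.pure c
  | (t + 1), c => (step n η h0 h1 c).bind (iter n η h0 h1 t)

/-- The inversion `c̄` of a configuration: `c̄(x) = 1 - c(-x)`. -/
def conf_inv (n : ℕ) (c : Config n) : Config n := fun x => 1 - c (-x)

/-- The constant configuration with all cells in state `σ`. -/
def endSt (n : ℕ) (σ : Fin 2) : Config n := fun _ => σ

/-- The number of cells of `c` in state 1. -/
def ones (n : ℕ) [NeZero n] (c : Config n) : ℕ :=
  (Finset.univ.filter fun x => c x = 1).card

/-- The correct end state for the configuration `c` (`n` odd):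
`e₁` if more than half of the cells are in state 1, and `e₀` otherwise. -/
def target (n : ℕ) [NeZero n] (c : Config n) : Config n :=
  if n < 2 * ones n c then endSt n 1 else endSt n 0

/-- The 1-block of length `ℓ`. -/
def block (n ℓ : ℕ) : Config n := fun x => if x.val < ℓ then 1 else 0


/-! ### Auxiliary lemmas for the symmetry proof -/

/-- The combined symmetry `G`: state flip plus spatial reflection,
`(G c)(x) = 1 - c(-1-x)`. -/
def symG (n : ℕ) (c : Config n) : Config n := fun x => 1 - c (-1 - x)

lemma fin2_sub_sub (a : Fin 2) : 1 - (1 - a) = a := by fin_cases a <;> rfl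

lemma symG_invol (n : ℕ) : Function.Involutive (symG n) := by
  intro c; funext x
  show 1 - (1 - c _) = c x
  rw [fin2_sub_sub]; ring_nf

lemma phi_flip (η : ℝ) (a b c : Fin 2) :
    phi η (1 - c) (1 - b) (1 - a) = 1 - phi η a b c := by
  fin_cases a <;> fin_cases b <;> fin_cases c <;> norm_num [phi]

lemma cellWeight_symG (n : ℕ) (η : ℝ) (c : Config n) (x : ZMod n) (σ : Fin 2) :
    cellWeight n η (symG n c) x σ = cellWeight n η c (-1 - x) (1 - σ) := by
  have e1 : -1 - (x - 1) = (-1 - x) + 1 := by ring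
  have e2 : -1 - (x + 1) = (-1 - x) - 1 := by ring
  simp only [cellWeight, symG, e1, e2]
  rw [phi_flip]
  fin_cases σ <;> simp

lemma stepFun_symG (n : ℕ) [NeZero n] (η : ℝ) (c c' : Config n) :
    stepFun n η (symG n c) (symG n c') = stepFun n η c c' := by
  unfold stepFun
  rw [← Equiv.prod_comp (Equiv.subLeft (-1 : ZMod n)) (fun x => cellWeight n η c x (c' x))]
  refine Finset.prod_congr rfl fun x _ => ?_
  rw [cellWeight_symG]
  show cellWeight n η c (-1 - x) (1 - (1 - c' (-1 - x))) = _
  rw [fin2_sub_sub]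
  rfl

lemma step_symG (n : ℕ) [NeZero n] (η : ℝ) (h0 : 0 ≤ η) (h1 : η ≤ 1) (c c' : Config n) :
    step n η h0 h1 (symG n c) (symG n c') = step n η h0 h1 c c' := by
  simp only [step, PMF.ofFintype_apply]
  exact stepFun_symG n η c c'

lemma iter_symG (n : ℕ) [NeZero n] (η : ℝ) (h0 : 0 ≤ η) (h1 : η ≤ 1) (t : ℕ) :
    ∀ c c' : Config n,
      iter n η h0 h1 t (symG n c) (symG n c') = iter n η h0 h1 t c c' := by
  induction t with
  | zero =>
      intro c c'
      simp only [iter, PMF.pure_apply]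
      congr 1
      simp [((symG_invol n).injective).eq_iff]
  | succ t ih =>
      intro c c'
      simp only [iter, PMF.bind_apply]
      rw [← Equiv.tsum_eq ((symG_invol n).toPerm) (fun d => step n η h0 h1 (symG n c) d * iter n η h0 h1 t d (symG n c'))]
      refine tsum_congr fun d => ?_
      show step n η h0 h1 (symG n c) (symG n d) * iter n η h0 h1 t (symG n d) (symG n c') = _
      rw [step_symG, ih]

lemma fin2_sub_eq_one_iff (a : Fin 2) : 1 - a = 1 ↔ a = 0 := by
  fin_cases a <;> simp

lemma fin2_eq_zero_iff (a : Fin 2) : a = 0 ↔ ¬ a = 1 := by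
  fin_cases a <;> simp

lemma ones_le (n : ℕ) [NeZero n] (c : Config n) : ones n c ≤ n := by
  have := Finset.card_filter_le (Finset.univ : Finset (ZMod n)) (fun x => c x = 1)
  simpa [ones, ZMod.card] using this

lemma ones_symG (n : ℕ) [NeZero n] (c : Config n) :
    ones n (symG n c) = n - ones n c := by
  have key : ones n (symG n c) = (Finset.univ.filter fun x => c x = 0).card := by
    unfold ones symG
    refine Finset.card_nbij' (fun x => -1 - x) (fun x => -1 - x) ?_ ?_ ?_ ?_
    · intro x hx
      simp only [Finset.mem_coe, Finset.mem_filter, Finset.mem_univ, true_and] at hx ⊢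
      rw [fin2_sub_eq_one_iff] at hx
      exact hx
    · intro x hx
      simp only [Finset.mem_coe, Finset.mem_filter, Finset.mem_univ, true_and] at hx ⊢
      rw [fin2_sub_eq_one_iff]
      have e : -1 - (-1 - x) = x := by ring
      rw [e]; exact hx
    · intro x _; simp only; ring
    · intro x _; simp only; ring
  have part : (Finset.univ.filter fun x => c x = 0).card + ones n c = n := by
    unfold ones
    rw [Finset.filter_congr (fun x _ => by rw [fin2_eq_zero_iff (c x)])]
    rw [Finset.filter_not]
    have := Finset.card_sdiff_add_card_eq_card
      (Finset.filter_subset (fun x => c x = 1) (Finset.univ : Finset (ZMod n)))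
    rw [this]
    simp [ZMod.card]
  omega

lemma symG_endSt (n : ℕ) (σ : Fin 2) : symG n (endSt n σ) = endSt n (1 - σ) := rfl

lemma target_symG (n : ℕ) [NeZero n] (hn : Odd n) (c : Config n) :
    target n (symG n c) = symG n (target n c) := by
  have hle := ones_le n c
  have hodd : n ≠ 2 * ones n c := by
    intro h; exact (Nat.not_even_iff_odd.mpr hn) ⟨ones n c, by omega⟩
  unfold target
  rw [ones_symG]
  by_cases h : n < 2 * ones n c
  · rw [if_pos h, if_neg (by omega), symG_endSt]; rfl
  · rw [if_neg h, if_pos (by omega), symG_endSt]; rfl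

lemma symG_block (n : ℕ) [NeZero n] (ℓ : ℕ) (hℓ : ℓ ≤ n) :
    symG n (block n ℓ) = block n (n - ℓ) := by
  funext x
  have hx : x.val < n := ZMod.val_lt x
  have hrep : (-1 - x : ZMod n) = ((n - 1 - x.val : ℕ) : ZMod n) := by
    have hv : ((x.val : ℕ) : ZMod n) = x := ZMod.natCast_zmod_val x
    have hsum : ((n - 1 - x.val) + 1 + x.val : ℕ) = n := by omega
    have key2 : ((n - 1 - x.val : ℕ) : ZMod n) + 1 + ((x.val : ℕ) : ZMod n) = 0 := by
      have h2 := congrArg (fun m : ℕ => (m : ZMod n)) hsum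
      simp only [Nat.cast_add, Nat.cast_one, ZMod.natCast_self] at h2
      exact h2
    rw [hv] at key2
    linear_combination -key2
  have hval : (-1 - x : ZMod n).val = n - 1 - x.val := by
    rw [hrep, ZMod.val_cast_of_lt (by omega)]
  show 1 - (if (-1 - x : ZMod n).val < ℓ then (1 : Fin 2) else 0)
      = if x.val < n - ℓ then 1 else 0
  rw [hval]
  by_cases h : n - 1 - x.val < ℓ
  · rw [if_pos h, if_neg (by omega)]; rfl
  · rw [if_neg h, if_pos (by omega)]; rfl

/-- Symmetry for 1-blocks: for `n` odd, the 1-block of length `ℓ`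
and the 1-block of length `n - ℓ` have the same probability of having reached
their respective correct end states after `t` steps. -/
theorem block_symmetry (n : ℕ) [NeZero n] (hn : Odd n) (η : ℝ)
    (h0 : 0 ≤ η) (h1 : η ≤ 1) (ℓ : ℕ) (hℓ : ℓ ≤ n) (t : ℕ) :
    iter n η h0 h1 t (block n ℓ) (target n (block n ℓ))
      = iter n η h0 h1 t (block n (n - ℓ)) (target n (block n (n - ℓ))) := by
  conv_rhs => rw [← symG_block n ℓ hℓ, target_symG n hn, iter_symG]
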